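/- In a CC-loop, if c is a power-associative WIP element, then E_c² = I: for all x, (((x·c)·c⁻¹)·c)·c⁻¹ = x, where c⁻¹ := c\1. -/

import Mathlib

/-- A loop: a type with multiplication, identity, and two-sided division. -/
class Loop (Q : Type*) extends Mul Q, One Q where
  ld : Q → Q → Q  -- left division: `ld x y = x \ y`
  rd : Q → Q → Q  -- right division: `rd x y = x / y`
  one_mul : ∀ x : Q, 1 * x = x
  mul_one : ∀ x : Q, x * 1 = x
  mul_ld : ∀ x y : Q, x * ld x y = y
  ld_mul : ∀ x y : Q, ld x (x * y) = y
  rd_mul : ∀ x y : Q, rd x y * y = x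
  mul_rd : ∀ x y : Q, rd (x * y) y = x

namespace Loop

variable {Q : Type*} [Loop Q]

/-- A conjugacy closed loop (CC-loop). -/
def IsCC (Q : Type*) [Loop Q] : Prop :=
  (∀ x y z : Q, x * (y * z) = rd (x * y) x * (x * z)) ∧
  (∀ x y z : Q, (z * y) * x = (z * x) * ld x (y * x))

/-- The nucleus `N(Q)`. -/
def nucleus (Q : Type*) [Loop Q] : Set Q :=
  {a | (∀ x y : Q, a * (x * y) = (a * x) * y) ∧
       (∀ x y : Q, x * (a * y) = (x * a) * y) ∧
       (∀ x y : Q, x * (y * a) = (x * y) * a)}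

/-- A subloop: contains 1 and is closed under `·`, `\`, `/`. -/
def IsSubloop (S : Set Q) : Prop :=
  (1 : Q) ∈ S ∧ (∀ a ∈ S, ∀ b ∈ S, a * b ∈ S) ∧
  (∀ a ∈ S, ∀ b ∈ S, ld a b ∈ S) ∧ (∀ a ∈ S, ∀ b ∈ S, rd a b ∈ S)

/-- The subloop generated by a set `S`. -/
def closure (S : Set Q) : Set Q := ⋂₀ {T : Set Q | IsSubloop T ∧ S ⊆ T}

/-- An element is power-associative if the subloop it generates is associative. -/
def IsPA (a : Q) : Prop :=
  ∀ x ∈ closure {a}, ∀ y ∈ closure {a}, ∀ z ∈ closure {a}, x * (y * z) = (x * y) * z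

/-- Powers: `pow a 0 = 1`, `pow a (n+1) = a * pow a n`. -/
def pow (a : Q) : ℕ → Q
  | 0 => 1
  | n + 1 => a * pow a n

/-- A WIP (weak inverse property) element. -/
def IsWIP (c : Q) : Prop := ∀ x : Q, c * ld (x * c) 1 = ld x 1

end Loop

open Loop

/-
Write `d = c⁻¹`, `M = L_c L_d` and `E = E_c = R_d R_c`. The left conjugacy closed law makes
every product of left translations fixing `1` an automorphism, so `M` commutes with the inversion
`J y = y \ 1`, and the two laws together give `M E = 1`. Conjugating by `J` turns `R_c` into
`L_c⁻¹` and `L_c` into `R_c⁻¹` when `c` is a WIP element; writing `E` through `L_c` and `R_c`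
this yields `J E = M J`. Hence `J = J M E = M J E = M² J`, so `M² = 1` and `E = M⁻¹ = M` is an
involution.
-/

namespace Loop

variable {Q : Type*} [Loop Q]

def IsLCC (Q : Type*) [Loop Q] : Prop :=
  ∀ x y z : Q, x * (y * z) = rd (x * y) x * (x * z)

def IsRCC (Q : Type*) [Loop Q] : Prop :=
  ∀ x y z : Q, (z * y) * x = (z * x) * ld x (y * x)

theorem IsCC.isLCC (hcc : IsCC Q) : IsLCC Q := hcc.1

theorem IsCC.isRCC (hcc : IsCC Q) : IsRCC Q := hcc.2

theorem ld_eq_of_mul_eq {x y z : Q} (h : x * y = z) : ld x z = y := h ▸ ld_mul x y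

theorem rd_eq_of_mul_eq {x y z : Q} (h : x * y = z) : rd z y = x := h ▸ mul_rd x y

theorem ld_rd_one (z : Q) : ld (rd 1 z) 1 = z := ld_eq_of_mul_eq (rd_mul 1 z)

theorem subset_closure (S : Set Q) : S ⊆ closure S :=
  fun _ ha => Set.mem_sInter.2 fun _ hT => hT.2 ha

theorem isSubloop_closure (S : Set Q) : IsSubloop (closure S) := by
  simp only [IsSubloop, closure, Set.mem_sInter]
  exact ⟨fun T hT => hT.1.1,
    fun a ha b hb T hT => hT.1.2.1 a (ha T hT) b (hb T hT),
    fun a ha b hb T hT => hT.1.2.2.1 a (ha T hT) b (hb T hT),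
    fun a ha b hb T hT => hT.1.2.2.2 a (ha T hT) b (hb T hT)⟩

theorem IsPA.ld_one_mul_self {a : Q} (ha : IsPA a) : ld a 1 * a = 1 := by
  have hmem : a ∈ closure {a} := subset_closure _ rfl
  have hinv : ld a 1 ∈ closure {a} :=
    (isSubloop_closure _).2.2.1 a hmem 1 (isSubloop_closure _).1
  have hassoc := ha _ hinv _ hmem _ hinv
  rw [mul_ld, Loop.mul_one] at hassoc
  calc ld a 1 * a = rd (ld a 1) (ld a 1) := (rd_eq_of_mul_eq hassoc.symm).symm
    _ = 1 := rd_eq_of_mul_eq (Loop.one_mul _)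

section Inverses

variable {c d : Q}

theorem IsLCC.mul_mul_of_mul_eq_one (hl : IsLCC Q) (hcd : c * d = 1) (y : Q) :
    c * (y * d) = rd (c * y) c := by
  rw [hl, hcd, Loop.mul_one]

theorem IsRCC.mul_mul_of_mul_eq_one (hr : IsRCC Q) (hdc : d * c = 1) (y : Q) :
    (d * y) * c = ld c (y * c) := by
  rw [hr, hdc, Loop.one_mul]

theorem IsRCC.mul_mul_comm_of_mul_eq_one (hr : IsRCC Q) (hcd : c * d = 1) (hdc : d * c = 1)
    (y : Q) : (y * c) * d = (y * d) * c := by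
  rw [hr, hcd, ld_eq_of_mul_eq hdc]

/-- `L_c L_d` fixes `1`, and conjugating by it permutes the left translations. -/
theorem IsLCC.mul_mul_map_mul_of_mul_eq_one (hl : IsLCC Q) (hcd : c * d = 1) (y z : Q) :
    c * (d * (y * z)) = (c * (d * y)) * (c * (d * z)) := by
  have key : ∀ z, c * (d * (y * z)) = rd (c * rd (d * y) d) c * (c * (d * z)) := fun z => by
    rw [hl d, hl c]
  have hy := key 1
  rw [Loop.mul_one, Loop.mul_one, hcd, Loop.mul_one] at hy
  rw [key z, ← hy]

theorem IsCC.mul_mul_mul_mul_cancel (hcc : IsCC Q) (hcd : c * d = 1) (u : Q) :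
    c * (d * ((u * c) * d)) = u := by
  have hE : d * ((u * c) * d) = ld c (u * c) * d := by
    have h := hcc.isRCC.mul_mul_of_mul_eq_one hcd (ld c (u * c))
    rw [mul_ld] at h
    rw [h, mul_ld]
  rw [hE, hcc.isLCC.mul_mul_of_mul_eq_one hcd, mul_ld, mul_rd]

theorem IsCC.mul_mul_mul_mul_left_comm (hcc : IsCC Q) (hcd : c * d = 1) (hdc : d * c = 1)
    (v : Q) : ((c * v) * c) * d = c * ((v * c) * d) := by
  have hdiv : ∀ w, ld d w * c = c * (w * c) := fun w => by
    have h := hcc.isRCC.mul_mul_of_mul_eq_one hdc (ld d w)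
    rw [mul_ld] at h
    rw [h, mul_ld]
  rw [hcc.isRCC.mul_mul_comm_of_mul_eq_one hcd hdc, hcc.isRCC.mul_mul_of_mul_eq_one hcd,
    hdiv, hcc.isRCC.mul_mul_comm_of_mul_eq_one hcd hdc]

theorem IsLCC.ld_mul_mul_one (hl : IsLCC Q) (hcd : c * d = 1) (x : Q) :
    ld (c * (d * x)) 1 = c * (d * ld x 1) := by
  refine ld_eq_of_mul_eq ?_
  rw [← hl.mul_mul_map_mul_of_mul_eq_one hcd, mul_ld, Loop.mul_one, hcd]

theorem IsWIP.ld_mul_one_of_isLCC (hw : IsWIP c) (hl : IsLCC Q) (hcd : c * d = 1) (y : Q) :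
    ld (c * y) 1 = ld y d := by
  have hinv : ∀ x, ld c x * ld x 1 = d := fun x => by
    have h := hl c (ld c x) (ld x 1)
    have hwx : c * ld x 1 = ld (rd x c) 1 := by simpa only [rd_mul] using hw (rd x c)
    rw [mul_ld, hwx, mul_ld] at h
    rw [← ld_eq_of_mul_eq h, ld_eq_of_mul_eq hcd]
  have h := hinv (c * y)
  rw [ld_mul] at h
  exact (ld_eq_of_mul_eq h).symm

theorem IsWIP.ld_mul_of_isRCC (hw : IsWIP c) (hr : IsRCC Q) (hdc : d * c = 1) (y : Q) :
    ld y d * c = ld y 1 := by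
  have h := hr c (ld y d) y
  rw [mul_ld, hdc] at h
  rw [← hw y, ld_eq_of_mul_eq h.symm, mul_ld]

/-- Together with `IsWIP`, which reads `J (y c) = c \ J y`: conjugation by `J` swaps `L_c` and
`R_c⁻¹`. -/
theorem IsWIP.ld_mul_one (hw : IsWIP c) (hcc : IsCC Q) (hcd : c * d = 1) (hdc : d * c = 1)
    (y : Q) : ld (c * y) 1 = rd (ld y 1) c := by
  rw [hw.ld_mul_one_of_isLCC hcc.isLCC hcd, ← hw.ld_mul_of_isRCC hcc.isRCC hdc, mul_rd]

theorem IsWIP.ld_mul_mul_one (hw : IsWIP c) (hcc : IsCC Q) (hcd : c * d = 1) (hdc : d * c = 1)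
    (y : Q) : ld ((y * c) * d) 1 = c * (d * ld y 1) := by
  have hrd : ∀ t, rd (ld c t) c = d * rd t c := fun t => by
    refine rd_eq_of_mul_eq ?_
    rw [hcc.isRCC.mul_mul_of_mul_eq_one hdc, rd_mul]
  rw [← mul_ld c y, hcc.mul_mul_mul_mul_left_comm hcd hdc, hcc.isLCC.mul_mul_of_mul_eq_one hcd,
    ← hw (rd _ c), rd_mul, hw.ld_mul_one hcc hcd hdc, hw.ld_mul_one hcc hcd hdc,
    ← ld_eq_of_mul_eq (hw _), hrd]

theorem IsWIP.mul_mul_mul_mul_eq_self (hw : IsWIP c) (hcc : IsCC Q) (hcd : c * d = 1)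
    (hdc : d * c = 1) (z : Q) : c * (d * (c * (d * z))) = z := by
  have hJ : ∀ y, ld y 1 = c * (d * (c * (d * ld y 1))) := fun y => by
    conv_lhs => rw [← hcc.mul_mul_mul_mul_cancel hcd y]
    rw [hcc.isLCC.ld_mul_mul_one hcd, hw.ld_mul_mul_one hcc hcd hdc]
  simpa only [ld_rd_one] using (hJ (rd 1 z)).symm

end Inverses

end Loop

/-- In a CC-loop, if `c` is a power-associative WIP element then `E_c² = I`. -/
theorem stmt_14 {Q : Type*} [Loop Q] (hcc : IsCC Q) (c : Q)
    (hpa : IsPA c) (hwip : IsWIP c) :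
    ∀ x : Q, (((x * c) * ld c 1) * c) * ld c 1 = x := by
  have hcd : c * ld c 1 = 1 := mul_ld c 1
  have hdc : ld c 1 * c = 1 := hpa.ld_one_mul_self
  have hM := hwip.mul_mul_mul_mul_eq_self hcc hcd hdc
  have hE : ∀ y, (y * c) * ld c 1 = c * (ld c 1 * y) := fun y => by
    rw [← hM ((y * c) * ld c 1), hcc.mul_mul_mul_mul_cancel hcd]
  intro x
  rw [hE, hE, hM]
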